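/- arXiv:2410.20380 — 2 statements merged into one kernel-verified Lean document; each statement's English description precedes it below -/
import Mathlib

section
/- Let X, Y, Z be random variables with values in finite nonempty types on a common probability space such that Z = f(X) for a deterministic function f and Z is sufficient for Y, i.e. I(Z;Y) = I(X;Y). Then the information the representation retains about the input is at least the label information: I(Z;X) ≥ I(X;Y). In particular, I(X;Y) is a lower bound for the minimality objective min over sufficient representations of I(Z;X). -/
open MeasureTheory ProbabilityTheory
open scoped BigOperators

/-- Shannon entropy (in nats) of a random variable `X` with values in a finite type,
with respect to the measure `μ`. -/
noncomputable def finEntropy {Ω : Type*} [MeasurableSpace Ω] (μ : Measure Ω)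
    {α : Type*} [Fintype α] (X : Ω → α) : ℝ :=
  - ∑ a : α, (μ (X ⁻¹' {a})).toReal * Real.log (μ (X ⁻¹' {a})).toReal

/-- Conditional Shannon entropy `H(X|Z) = H(X,Z) - H(Z)`. -/
noncomputable def finCondEntropy {Ω : Type*} [MeasurableSpace Ω] (μ : Measure Ω)
    {α β : Type*} [Fintype α] [Fintype β] (X : Ω → α) (Z : Ω → β) : ℝ :=
  finEntropy μ (fun ω => (X ω, Z ω)) - finEntropy μ Z

/-- Shannon mutual information `I(X;Y) = H(X) + H(Y) - H(X,Y)`. -/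
noncomputable def finMutualInfo {Ω : Type*} [MeasurableSpace Ω] (μ : Measure Ω)
    {α β : Type*} [Fintype α] [Fintype β] (X : Ω → α) (Y : Ω → β) : ℝ :=
  finEntropy μ X + finEntropy μ Y - finEntropy μ (fun ω => (X ω, Y ω))

/-- Conditional Shannon mutual information
`I(X;Y|S) = H(X,S) + H(Y,S) - H(X,Y,S) - H(S)`. -/
noncomputable def finCondMutualInfo {Ω : Type*} [MeasurableSpace Ω] (μ : Measure Ω)
    {α β γ : Type*} [Fintype α] [Fintype β] [Fintype γ]
    (X : Ω → α) (Y : Ω → β) (S : Ω → γ) : ℝ :=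
  finEntropy μ (fun ω => (X ω, S ω)) + finEntropy μ (fun ω => (Y ω, S ω))
    - finEntropy μ (fun ω => (X ω, Y ω, S ω)) - finEntropy μ S

/-!
Since `Z = f ∘ X` is a function of `X`, the pair `(Z, X)` carries no more information than `X`,
so `I(Z;X) = H(Z)`. On the other hand every mutual information with `Z` is bounded by `H(Z)`,
because `H(Y) ≤ H(Z, Y)`. Sufficiency then gives `I(X;Y) = I(Z;Y) ≤ H(Z) = I(Z;X)`.
-/

namespace Real

lemma negMulLog_sum_le_sum_negMulLog {ι : Type*} (s : Finset ι) (p : ι → ℝ)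
    (hp : ∀ i ∈ s, 0 ≤ p i) :
    negMulLog (∑ i ∈ s, p i) ≤ ∑ i ∈ s, negMulLog (p i) := by
  have term_le : ∀ i ∈ s, p i * -log (∑ j ∈ s, p j) ≤ negMulLog (p i) := by
    intro i hi
    rcases (hp i hi).eq_or_lt with hpi | hpi
    · simp [← hpi]
    · have hlog : log (p i) ≤ log (∑ j ∈ s, p j) :=
        log_le_log hpi (Finset.single_le_sum hp hi)
      rw [negMulLog, neg_mul, mul_neg]
      exact neg_le_neg (mul_le_mul_of_nonneg_left hlog hpi.le)
  calc negMulLog (∑ i ∈ s, p i) = ∑ i ∈ s, p i * -log (∑ j ∈ s, p j) := by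
        rw [negMulLog, ← Finset.sum_mul, neg_mul, mul_neg]
    _ ≤ ∑ i ∈ s, negMulLog (p i) := Finset.sum_le_sum term_le

end Real

section Entropy

variable {Ω : Type*} [MeasurableSpace Ω] {μ : Measure Ω} {α β : Type*} [Fintype α] [Fintype β]

lemma finEntropy_eq_sum_negMulLog (X : Ω → α) :
    finEntropy μ X = ∑ a, Real.negMulLog (μ (X ⁻¹' {a})).toReal := by
  simp only [finEntropy, Real.negMulLog, neg_mul, Finset.sum_neg_distrib]

lemma finEntropy_comp_le [IsFiniteMeasure μ] [MeasurableSpace α] [MeasurableSingletonClass α]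
    {W : Ω → α} (hW : Measurable W) (g : α → β) :
    finEntropy μ (g ∘ W) ≤ finEntropy μ W := by
  classical
  rw [finEntropy_eq_sum_negMulLog, finEntropy_eq_sum_negMulLog,
    ← Finset.sum_fiberwise Finset.univ g]
  refine Finset.sum_le_sum fun b _ => ?_
  have fiber_measure : (μ ((g ∘ W) ⁻¹' {b})).toReal
      = ∑ a ∈ Finset.univ.filter (g · = b), (μ (W ⁻¹' {a})).toReal := by
    rw [← ENNReal.toReal_sum fun a _ => measure_ne_top μ _,
      sum_measure_preimage_singleton _ fun a _ => hW (measurableSet_singleton a)]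
    congr 2
    ext ω
    simp
  rw [fiber_measure]
  exact Real.negMulLog_sum_le_sum_negMulLog _ _ fun a _ => ENNReal.toReal_nonneg

lemma finEntropy_comp_prod_self (X : Ω → α) (f : α → β) :
    finEntropy μ (fun ω => (f (X ω), X ω)) = finEntropy μ X := by
  rw [finEntropy_eq_sum_negMulLog, finEntropy_eq_sum_negMulLog, Fintype.sum_prod_type_right]
  refine Finset.sum_congr rfl fun a _ => ?_
  rw [Finset.sum_eq_single (f a)]
  · congr 3
    ext ω
    simp only [Set.mem_preimage, Set.mem_singleton_iff, Prod.mk.injEq]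
    exact ⟨And.right, fun h => ⟨h ▸ rfl, h⟩⟩
  · intro b _ hb
    have empty : (fun ω => (f (X ω), X ω)) ⁻¹' {(b, a)} = ∅ := by
      ext ω
      simp only [Set.mem_preimage, Set.mem_singleton_iff, Prod.mk.injEq, Set.mem_empty_iff_false,
        iff_false, not_and]
      rintro hfb rfl
      exact hb hfb.symm
    simp [empty]
  · simp

lemma finMutualInfo_comp_self (X : Ω → α) (f : α → β) :
    finMutualInfo μ (f ∘ X) X = finEntropy μ (f ∘ X) := by
  rw [finMutualInfo, Function.comp_def, finEntropy_comp_prod_self]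
  ring

lemma finMutualInfo_le_finEntropy_left [IsFiniteMeasure μ]
    [MeasurableSpace α] [MeasurableSingletonClass α] [MeasurableSpace β] [MeasurableSingletonClass β]
    {Z : Ω → α} {Y : Ω → β} (hZ : Measurable Z) (hY : Measurable Y) :
    finMutualInfo μ Z Y ≤ finEntropy μ Z := by
  have marginal_le_joint : finEntropy μ Y ≤ finEntropy μ (fun ω => (Z ω, Y ω)) :=
    finEntropy_comp_le (hZ.prodMk hY) Prod.snd
  rw [finMutualInfo]
  linarith

end Entropy

theorem sufficiency_lower_bound_minimality_general {Ω : Type*} [MeasurableSpace Ω]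
    (μ : Measure Ω) [IsProbabilityMeasure μ]
    {𝒳 𝒴 𝒵 : Type*}
    [Fintype 𝒳]
    [Fintype 𝒴] [MeasurableSpace 𝒴] [MeasurableSingletonClass 𝒴]
    [Fintype 𝒵] [MeasurableSpace 𝒵] [MeasurableSingletonClass 𝒵]
    (X : Ω → 𝒳) (Y : Ω → 𝒴) (Z : Ω → 𝒵)
    (hY : Measurable Y) (hZ : Measurable Z)
    (f : 𝒳 → 𝒵) (hZf : Z = f ∘ X)
    (hsuff : finMutualInfo μ Z Y = finMutualInfo μ X Y) :
    finMutualInfo μ Z X ≥ finMutualInfo μ X Y := by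
  subst hZf
  calc finMutualInfo μ X Y = finMutualInfo μ (f ∘ X) Y := hsuff.symm
    _ ≤ finEntropy μ (f ∘ X) := finMutualInfo_le_finEntropy_left hZ hY
    _ = finMutualInfo μ (f ∘ X) X := (finMutualInfo_comp_self X f).symm

theorem sufficiency_lower_bound_minimality {Ω : Type*} [MeasurableSpace Ω]
    (μ : Measure Ω) [IsProbabilityMeasure μ]
    {𝒳 𝒴 𝒵 : Type*}
    [Fintype 𝒳] [Nonempty 𝒳] [MeasurableSpace 𝒳] [MeasurableSingletonClass 𝒳]
    [Fintype 𝒴] [Nonempty 𝒴] [MeasurableSpace 𝒴] [MeasurableSingletonClass 𝒴]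
    [Fintype 𝒵] [Nonempty 𝒵] [MeasurableSpace 𝒵] [MeasurableSingletonClass 𝒵]
    (X : Ω → 𝒳) (Y : Ω → 𝒴) (Z : Ω → 𝒵)
    (hX : Measurable X) (hY : Measurable Y) (hZ : Measurable Z)
    (f : 𝒳 → 𝒵) (hZf : Z = f ∘ X)
    (hsuff : finMutualInfo μ Z Y = finMutualInfo μ X Y) :
    finMutualInfo μ Z X ≥ finMutualInfo μ X Y :=
  sufficiency_lower_bound_minimality_general μ X Y Z hY hZ f hZf hsuff
end

section
/- Let S, Y, X, Z be random variables with values in finite nonempty types on a common probability space such that: (i) S and Y are independent; (ii) Z = f(X) for a deterministic function f; (iii) Z is sufficient for Y, i.e. I(Z;Y) = I(X;Y); and (iv) Z attains the minimal possible information about the input among sufficient representations, namely I(Z;X) = I(X;Y). Then Z is invariant to the nuisance S: I(Z;S) = 0. -/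
open MeasureTheory ProbabilityTheory
open scoped BigOperators

section aux
set_option linter.unusedSectionVars false
set_option linter.unusedVariables false
variable {Ω : Type*} [MeasurableSpace Ω] {μ : Measure Ω} [IsProbabilityMeasure μ]

lemma aux_sum_one {α : Type*} [Fintype α] [MeasurableSpace α] [MeasurableSingletonClass α]
    {W : Ω → α} (hW : Measurable W) :
    ∑ a : α, (μ (W ⁻¹' {a})).toReal = 1 := by
  have h : (∑ a : α, μ (W ⁻¹' {a})) = 1 := by
    rw [sum_measure_preimage_singleton (Finset.univ)
      (fun a _ => hW (measurableSet_singleton a))]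
    simp
  rw [← ENNReal.toReal_sum (fun a _ => (measure_lt_top μ _).ne), h, ENNReal.toReal_one]

lemma finEntropy_comp_injective {α β : Type*} [Fintype α] [Fintype β]
    {e : α → β} (he : Function.Injective e) (W : Ω → α) :
    finEntropy μ (e ∘ W) = finEntropy μ W := by
  classical
  unfold finEntropy
  congr 1
  calc ∑ b : β, (μ ((e ∘ W) ⁻¹' {b})).toReal * Real.log (μ ((e ∘ W) ⁻¹' {b})).toReal
      = ∑ b ∈ Finset.univ.image e,
          (μ ((e ∘ W) ⁻¹' {b})).toReal * Real.log (μ ((e ∘ W) ⁻¹' {b})).toReal := by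
        refine (Finset.sum_subset (Finset.subset_univ _) ?_).symm
        intro b _ hb
        have : (e ∘ W) ⁻¹' {b} = ∅ := by
          ext ω
          simp only [Set.mem_preimage, Function.comp_apply, Set.mem_singleton_iff,
            Set.mem_empty_iff_false, iff_false]
          intro h
          exact hb (Finset.mem_image.2 ⟨W ω, Finset.mem_univ _, h⟩)
        simp [this]
    _ = ∑ a : α, (μ ((e ∘ W) ⁻¹' {e a})).toReal * Real.log (μ ((e ∘ W) ⁻¹' {e a})).toReal :=
        Finset.sum_image (fun a _ b _ h => he h)
    _ = ∑ a : α, (μ (W ⁻¹' {a})).toReal * Real.log (μ (W ⁻¹' {a})).toReal := by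
        refine Finset.sum_congr rfl fun a _ => ?_
        have : (e ∘ W) ⁻¹' {e a} = W ⁻¹' {a} := by
          ext ω; simp [he.eq_iff]
        rw [this]

lemma aux_fiber_sum {α β : Type*} [Fintype α] [Fintype β]
    [MeasurableSpace α] [MeasurableSingletonClass α]
    [MeasurableSpace β] [MeasurableSingletonClass β]
    {V : Ω → α} {W : Ω → β} (hV : Measurable V) (hW : Measurable W) (b : β) :
    ∑ a : α, μ ((fun ω => (V ω, W ω)) ⁻¹' {(a, b)}) = μ (W ⁻¹' {b}) := by
  have h1 : ∀ a : α, (fun ω => (V ω, W ω)) ⁻¹' {(a, b)} = V ⁻¹' {a} ∩ W ⁻¹' {b} := by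
    intro a; ext ω; simp [Prod.ext_iff]
  have h2 : ∀ a : α, μ ((fun ω => (V ω, W ω)) ⁻¹' {(a, b)})
      = (μ.restrict (W ⁻¹' {b})) (V ⁻¹' {a}) := by
    intro a
    rw [Measure.restrict_apply (hV (measurableSet_singleton a)), h1]
  simp only [h2]
  rw [sum_measure_preimage_singleton (Finset.univ)
    (fun a _ => hV (measurableSet_singleton a))]
  simp [Measure.restrict_apply_univ]

lemma finEntropy_congr_ae {α : Type*} [Fintype α] {V W : Ω → α}
    (h : V =ᵐ[μ] W) : finEntropy μ V = finEntropy μ W := by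
  unfold finEntropy
  congr 1
  refine Finset.sum_congr rfl fun a _ => ?_
  have : μ (V ⁻¹' {a}) = μ (W ⁻¹' {a}) := by
    apply measure_congr
    filter_upwards [h] with ω hω
    change (V ω ∈ ({a} : Set α)) = (W ω ∈ ({a} : Set α))
    rw [hω]
  rw [this]

lemma finMutualInfo_eq_zero_of_indep
    {α β : Type*} [Fintype α] [Fintype β]
    [MeasurableSpace α] [MeasurableSingletonClass α]
    [MeasurableSpace β] [MeasurableSingletonClass β]
    {V : Ω → α} {W : Ω → β} (hV : Measurable V) (hW : Measurable W)
    (h : IndepFun V W μ) : finMutualInfo μ V W = 0 := by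
  have hfac : ∀ (a : α) (b : β),
      (μ ((fun ω => (V ω, W ω)) ⁻¹' {(a, b)})).toReal
        = (μ (V ⁻¹' {a})).toReal * (μ (W ⁻¹' {b})).toReal := by
    intro a b
    have hmul := h.measure_inter_preimage_eq_mul {a} {b}
      (measurableSet_singleton a) (measurableSet_singleton b)
    have hset : (fun ω => (V ω, W ω)) ⁻¹' {(a, b)} = V ⁻¹' {a} ∩ W ⁻¹' {b} := by
      ext ω; simp [Prod.ext_iff]
    rw [hset, hmul, ENNReal.toReal_mul]
  have hxy : ∀ x y : ℝ, 0 ≤ x → 0 ≤ y →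
      (x * y) * Real.log (x * y) = y * (x * Real.log x) + x * (y * Real.log y) := by
    intro x y hx hy
    rcases eq_or_lt_of_le hx with h0 | h0
    · simp [← h0]
    rcases eq_or_lt_of_le hy with h0' | h0'
    · simp [← h0']
    rw [Real.log_mul h0.ne' h0'.ne']; ring
  have hp1 : ∑ a : α, (μ (V ⁻¹' {a})).toReal = 1 := aux_sum_one hV
  have hq1 : ∑ b : β, (μ (W ⁻¹' {b})).toReal = 1 := aux_sum_one hW
  have key : ∑ x : α × β,
      (μ ((fun ω => (V ω, W ω)) ⁻¹' {x})).toReal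
        * Real.log (μ ((fun ω => (V ω, W ω)) ⁻¹' {x})).toReal
      = ∑ a : α, (μ (V ⁻¹' {a})).toReal * Real.log (μ (V ⁻¹' {a})).toReal
        + ∑ b : β, (μ (W ⁻¹' {b})).toReal * Real.log (μ (W ⁻¹' {b})).toReal := by
    rw [Fintype.sum_prod_type]
    have : ∀ (a : α) (b : β),
        (μ ((fun ω => (V ω, W ω)) ⁻¹' {(a, b)})).toReal
          * Real.log (μ ((fun ω => (V ω, W ω)) ⁻¹' {(a, b)})).toReal
        = (μ (W ⁻¹' {b})).toReal * ((μ (V ⁻¹' {a})).toReal * Real.log (μ (V ⁻¹' {a})).toReal)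
          + (μ (V ⁻¹' {a})).toReal * ((μ (W ⁻¹' {b})).toReal * Real.log (μ (W ⁻¹' {b})).toReal) := by
      intro a b
      rw [hfac]
      exact hxy _ _ ENNReal.toReal_nonneg ENNReal.toReal_nonneg
    simp only [this, Finset.sum_add_distrib, ← Finset.mul_sum, ← Finset.sum_mul, hp1, hq1,
      one_mul, mul_one]
  unfold finMutualInfo finEntropy
  rw [key]
  ring

end aux

theorem minimal_sufficient_is_invariant {Ω : Type*} [MeasurableSpace Ω]
    (μ : Measure Ω) [IsProbabilityMeasure μ]
    {𝒮 𝒴 𝒳 𝒵 : Type*}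
    [Fintype 𝒮] [Nonempty 𝒮] [MeasurableSpace 𝒮] [MeasurableSingletonClass 𝒮]
    [Fintype 𝒴] [Nonempty 𝒴] [MeasurableSpace 𝒴] [MeasurableSingletonClass 𝒴]
    [Fintype 𝒳] [Nonempty 𝒳] [MeasurableSpace 𝒳] [MeasurableSingletonClass 𝒳]
    [Fintype 𝒵] [Nonempty 𝒵] [MeasurableSpace 𝒵] [MeasurableSingletonClass 𝒵]
    (S : Ω → 𝒮) (Y : Ω → 𝒴) (X : Ω → 𝒳) (Z : Ω → 𝒵)
    (hS : Measurable S) (hY : Measurable Y) (hX : Measurable X) (hZ : Measurable Z)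
    (hindep : IndepFun S Y μ)
    (f : 𝒳 → 𝒵) (hZf : Z = f ∘ X)
    (hsuff : finMutualInfo μ Z Y = finMutualInfo μ X Y)
    (hmin : finMutualInfo μ Z X = finMutualInfo μ X Y) :
    finMutualInfo μ Z S = 0 := by
  classical
  -- Step 1: H(Z,X) = H(X) since Z = f ∘ X
  have hepair : (fun ω => (Z ω, X ω)) = (fun x : 𝒳 => (f x, x)) ∘ X := by
    funext ω; simp [hZf]
  have hinj : Function.Injective (fun x : 𝒳 => (f x, x)) :=
    fun a b h => congrArg Prod.snd h
  have hZX : finEntropy μ (fun ω => (Z ω, X ω)) = finEntropy μ X := by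
    rw [hepair]; exact finEntropy_comp_injective hinj X
  -- Step 2: H(Z,Y) = H(Y)
  have hZY : finEntropy μ (fun ω => (Z ω, Y ω)) = finEntropy μ Y := by
    have key : finMutualInfo μ Z Y = finMutualInfo μ Z X := hsuff.trans hmin.symm
    unfold finMutualInfo at key
    rw [hZX] at key
    linarith
  -- notation
  set p : 𝒵 → 𝒴 → ℝ := fun z y => (μ ((fun ω => (Z ω, Y ω)) ⁻¹' {(z, y)})).toReal with hpdef
  set q : 𝒴 → ℝ := fun y => (μ (Y ⁻¹' {y})).toReal with hqdef
  have hsum : ∀ y : 𝒴, ∑ z : 𝒵, p z y = q y := by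
    intro y
    have h := aux_fiber_sum (μ := μ) hZ hY y
    calc ∑ z : 𝒵, p z y
        = (∑ z : 𝒵, μ ((fun ω => (Z ω, Y ω)) ⁻¹' {(z, y)})).toReal :=
          (ENNReal.toReal_sum (fun _ _ => (measure_lt_top μ _).ne)).symm
      _ = q y := by rw [h]
  have hple : ∀ z y, p z y ≤ q y := by
    intro z y
    apply ENNReal.toReal_mono (measure_lt_top μ _).ne
    apply measure_mono
    intro ω hω
    simp only [Set.mem_preimage, Set.mem_singleton_iff, Prod.mk.injEq] at hω
    simp [hω.2]
  -- Step 3: the gap is zero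
  have hgap : ∑ z : 𝒵, ∑ y : 𝒴, p z y * (Real.log (q y) - Real.log (p z y)) = 0 := by
    have e1 : ∑ z : 𝒵, ∑ y : 𝒴, p z y * Real.log (q y)
        = ∑ y : 𝒴, q y * Real.log (q y) := by
      rw [Finset.sum_comm]
      refine Finset.sum_congr rfl fun y _ => ?_
      rw [← Finset.sum_mul, hsum y]
    have e2 : ∑ z : 𝒵, ∑ y : 𝒴, p z y * Real.log (p z y)
        = -(finEntropy μ (fun ω => (Z ω, Y ω))) := by
      unfold finEntropy
      rw [neg_neg, Fintype.sum_prod_type]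
    have e3 : ∑ y : 𝒴, q y * Real.log (q y) = -(finEntropy μ Y) := by
      unfold finEntropy
      rw [neg_neg]
    simp only [mul_sub, Finset.sum_sub_distrib]
    rw [e1, e2, e3, hZY]
    ring
  have hnn : ∀ z ∈ (Finset.univ : Finset 𝒵), ∀ y ∈ (Finset.univ : Finset 𝒴),
      0 ≤ p z y * (Real.log (q y) - Real.log (p z y)) := by
    intro z _ y _
    rcases (show (0:ℝ) ≤ p z y from ENNReal.toReal_nonneg).lt_or_eq with h0 | h0
    · have hlog : Real.log (p z y) ≤ Real.log (q y) := Real.log_le_log h0 (hple z y)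
      exact mul_nonneg h0.le (sub_nonneg.2 hlog)
    · rw [show p z y = 0 from h0.symm]; simp
  -- each term is zero
  have hterm : ∀ z y, p z y * (Real.log (q y) - Real.log (p z y)) = 0 := by
    intro z y
    have h1 := (Finset.sum_eq_zero_iff_of_nonneg
      (fun z hz => Finset.sum_nonneg (fun y hy => hnn z hz y hy))).1 hgap z (Finset.mem_univ z)
    exact (Finset.sum_eq_zero_iff_of_nonneg (fun y hy => hnn z (Finset.mem_univ z) y hy)).1
      h1 y (Finset.mem_univ y)
  have hdichot : ∀ z y, p z y = 0 ∨ p z y = q y := by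
    intro z y
    rcases mul_eq_zero.1 (hterm z y) with h | h
    · exact Or.inl h
    · rcases (show (0:ℝ) ≤ p z y from ENNReal.toReal_nonneg).lt_or_eq with h0 | h0
      swap
      · exact Or.inl h0.symm
      · right
        have hq0 : 0 < q y := lt_of_lt_of_le h0 (hple z y)
        have hlog : Real.log (p z y) = Real.log (q y) := by linarith [sub_eq_zero.1 h]
        exact Real.log_injOn_pos (Set.mem_Ioi.2 h0) (Set.mem_Ioi.2 hq0) hlog
  -- define g
  let g : 𝒴 → 𝒵 := fun y => if h : ∃ z, p z y ≠ 0 then h.choose else Classical.arbitrary 𝒵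
  have hg : ∀ z y, p z y ≠ 0 → z = g y := by
    intro z y hz
    by_contra hne
    have hex : ∃ z, p z y ≠ 0 := ⟨z, hz⟩
    have hgy : p (g y) y ≠ 0 := by
      simp only [g, dif_pos hex]
      exact hex.choose_spec
    have h1 : p z y = q y := (hdichot z y).resolve_left hz
    have h2 : p (g y) y = q y := (hdichot _ y).resolve_left hgy
    have hqpos : 0 < q y := by
      rcases (show (0:ℝ) ≤ p z y from ENNReal.toReal_nonneg).lt_or_eq with h' | h'
      · exact h1 ▸ h'
      · exact absurd h'.symm hz
    have hsum2 : p z y + p (g y) y ≤ ∑ z' : 𝒵, p z' y := by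
      have hss := Finset.sum_le_sum_of_subset_of_nonneg
        (Finset.subset_univ ({z, g y} : Finset 𝒵))
        (fun i _ _ => (show (0:ℝ) ≤ p i y from ENNReal.toReal_nonneg))
      rwa [Finset.sum_pair hne] at hss
    rw [hsum y, h1, h2] at hsum2
    linarith
  -- Z = g ∘ Y almost everywhere
  have hae : Z =ᵐ[μ] g ∘ Y := by
    have hnull : ∀ zy : 𝒵 × 𝒴, zy.1 ≠ g zy.2 →
        μ ((fun ω => (Z ω, Y ω)) ⁻¹' {zy}) = 0 := by
      intro zy hne
      have hp0 : p zy.1 zy.2 = 0 := by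
        by_contra hp
        exact hne (hg zy.1 zy.2 hp)
      have := (ENNReal.toReal_eq_zero_iff _).1 hp0
      rcases this with h | h
      · simpa using h
      · exact absurd h (measure_lt_top μ _).ne
    have hN : μ {ω | Z ω ≠ g (Y ω)} = 0 := by
      have hsub : {ω | Z ω ≠ g (Y ω)} ⊆
          ⋃ zy ∈ {zy : 𝒵 × 𝒴 | zy.1 ≠ g zy.2}, (fun ω => (Z ω, Y ω)) ⁻¹' {zy} := by
        intro ω hω
        refine Set.mem_biUnion (show ((Z ω, Y ω) : 𝒵 × 𝒴) ∈ {zy : 𝒵 × 𝒴 | zy.1 ≠ g zy.2} from hω) ?_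
        simp
      refine measure_mono_null hsub ?_
      refine (measure_biUnion_null_iff (Set.to_countable _)).2 ?_
      intro zy hzy
      exact hnull zy hzy
    rw [Filter.EventuallyEq, ae_iff]
    exact hN
  -- conclude
  have hgmeas : Measurable g := Measurable.of_discrete
  have hgY : Measurable (g ∘ Y) := hgmeas.comp hY
  have hind2 : IndepFun (g ∘ Y) S μ := hindep.symm.comp hgmeas measurable_id
  have hpairae : (fun ω => (Z ω, S ω)) =ᵐ[μ] (fun ω => ((g ∘ Y) ω, S ω)) := by
    filter_upwards [hae] with ω h
    rw [h]
  have hcongr : finMutualInfo μ Z S = finMutualInfo μ (g ∘ Y) S := by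
    unfold finMutualInfo
    rw [finEntropy_congr_ae hae, finEntropy_congr_ae hpairae]
  rw [hcongr]
  exact finMutualInfo_eq_zero_of_indep hgY hS hind2
end
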